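/- arXiv:2004.07445 — 2 statements merged into one kernel-verified Lean document; each statement's English description precedes it below -/
import Mathlib

section
/- Let G be a group and F : G → ℝ a function satisfying: (i) |F(ab) − F(a) − F(b)| ≤ 1 for all a, b; (ii) there is a central element t with F(tφ) = F(φ) + 1 for all φ. Suppose h₁, …, h_m ∈ G with F(hᵢ) = 0 for all i, and let β = t^d · (h_m ⋯ h₁) for an integer d ≥ 0. Then d ≤ F(β) + m − 1 ≤ d + 2(m − 1), and in particular if m = 1 then F(β) = d. -/
/-!
Writing `β = t ^ d * P` with `P = h_m ⋯ h₁`, the twisting property gives `F β = F P + d`, and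
applying the defect bound `m - 1` times gives `|F P - ∑ F (hᵢ)| ≤ m - 1`, where the sum vanishes.
-/

section Quasimorphism

variable {G : Type*} [Group G] (F : G → ℝ)

theorem apply_pow_mul_of_apply_mul_eq_add_one {t : G} (htw : ∀ φ : G, F (t * φ) = F φ + 1)
    (d : ℕ) (x : G) : F (t ^ d * x) = F x + d := by
  induction d with
  | zero => simp
  | succ n ih =>
    rw [pow_succ', mul_assoc, htw, ih]
    push_cast
    ring

theorem abs_apply_prod_cons_sub_sum_le {D : ℝ} (hquasi : ∀ a b : G, |F (a * b) - F a - F b| ≤ D)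
    (a : G) (l : List G) :
    |F (a :: l).prod - ((a :: l).map F).sum| ≤ D * l.length := by
  induction l generalizing a with
  | nil => simp
  | cons b l ih =>
    set P := (b :: l).prod
    have hsplit : F (a * P) - (F a + ((b :: l).map F).sum)
        = (F (a * P) - F a - F P) + (F P - ((b :: l).map F).sum) := by ring
    calc |F (a :: b :: l).prod - ((a :: b :: l).map F).sum|
        = |(F (a * P) - F a - F P) + (F P - ((b :: l).map F).sum)| := by
          rw [List.prod_cons, List.map_cons, List.sum_cons, hsplit]
      _ ≤ |F (a * P) - F a - F P| + |F P - ((b :: l).map F).sum| := abs_add_le _ _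
      _ ≤ D + D * l.length := add_le_add (hquasi a P) (ih b)
      _ = D * (b :: l).length := by push_cast [List.length_cons]; ring

theorem abs_apply_prod_le_of_forall_apply_eq_zero
    (hquasi : ∀ a b : G, |F (a * b) - F a - F b| ≤ 1) {L : List G} (hL : L ≠ [])
    (hzero : ∀ x ∈ L, F x = 0) : |F L.prod| ≤ (L.length : ℝ) - 1 := by
  obtain ⟨a, l, rfl⟩ := List.exists_cons_of_ne_nil hL
  have hsum : ((a :: l).map F).sum = 0 :=
    List.sum_eq_zero fun y hy => by
      obtain ⟨x, hx, rfl⟩ := List.mem_map.mp hy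
      exact hzero x hx
  rw [List.length_cons, Nat.cast_succ, add_sub_cancel_right]
  simpa only [hsum, sub_zero, one_mul] using abs_apply_prod_cons_sub_sum_le F hquasi a l

end Quasimorphism

theorem stmt16_general {G : Type*} [Group G] (F : G → ℝ)
    (hquasi : ∀ a b : G, |F (a * b) - F a - F b| ≤ 1)
    (t : G)
    (htw : ∀ φ : G, F (t * φ) = F φ + 1)
    (m : ℕ) (hm : 1 ≤ m) (h : Fin m → G) (hzero : ∀ i, F (h i) = 0)
    (d : ℕ) (β : G) (hβ : β = t ^ d * ((List.finRange m).reverse.map h).prod) :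
    ((d : ℝ) ≤ F β + (m : ℝ) - 1 ∧ F β + (m : ℝ) - 1 ≤ (d : ℝ) + 2 * ((m : ℝ) - 1)) ∧
      (m = 1 → F β = d) := by
  set L := (List.finRange m).reverse.map h
  have hlen : L.length = m := by simp [L]
  have hne : L ≠ [] := List.ne_nil_of_length_pos (by omega)
  have hLzero : ∀ x ∈ L, F x = 0 := by
    simp only [L, List.mem_map]
    rintro _ ⟨i, -, rfl⟩
    exact hzero i
  have hFβ : F β = F L.prod + d := hβ ▸ apply_pow_mul_of_apply_mul_eq_add_one F htw d L.prod
  have hbound := abs_le.mp (abs_apply_prod_le_of_forall_apply_eq_zero F hquasi hne hLzero)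
  rw [hlen] at hbound
  refine ⟨⟨by linarith, by linarith⟩, fun hm1 => ?_⟩
  subst hm1
  norm_num at hbound
  linarith

/-- If F is a quasimorphism of defect ≤ 1 with a central element t satisfying
F(tφ) = F(φ) + 1, and β = t^d · (h_m ⋯ h₁) with F(hᵢ) = 0 for all i, then
d ≤ F(β) + m − 1 ≤ d + 2(m − 1); if moreover m = 1 then F(β) = d. -/
theorem stmt16 {G : Type*} [Group G] (F : G → ℝ)
    (hquasi : ∀ a b : G, |F (a * b) - F a - F b| ≤ 1)
    (t : G) (ht : ∀ g : G, t * g = g * t)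
    (htw : ∀ φ : G, F (t * φ) = F φ + 1)
    (m : ℕ) (hm : 1 ≤ m) (h : Fin m → G) (hzero : ∀ i, F (h i) = 0)
    (d : ℕ) (β : G) (hβ : β = t ^ d * ((List.finRange m).reverse.map h).prod) :
    ((d : ℝ) ≤ F β + (m : ℝ) - 1 ∧ F β + (m : ℝ) - 1 ≤ (d : ℝ) + 2 * ((m : ℝ) - 1)) ∧
      (m = 1 → F β = d) :=
  stmt16_general F hquasi t htw m hm h hzero d β hβ
end

section
/- In the braid group Bₙ (n ≥ 2), for each generator σᵢ the element Δ²σᵢ⁻¹ lies in the submonoid generated by the positive generators σ₁, …, σ_{n-1} (i.e., it can be written as a positive braid word). -/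
/-!
With `m = n - 1` generators, write `δ = σ₀σ₁⋯σ_{m-1}`, so that `Δ² = δ^{m+1}`. The braid
relations give `δ σⱼ = σⱼ₊₁ δ` for `j + 1 < m`, hence `δᵏ σᵢ = σ_{m-1} δᵏ` with `k = m - 1 - i`.
Since `δ = (σ₀⋯σ_{m-2}) σ_{m-1}`, this exhibits `Δ² σᵢ⁻¹ = δ^{i+1} (σ₀⋯σ_{m-2}) δᵏ` as a
positive word.
-/

/-- The Artin relations for the braid group with generators σ₀, …, σ_{m-1}
(i.e. the braid group on m+1 strands):
σᵢσⱼ = σⱼσᵢ for |i−j| ≥ 2 and σᵢσᵢ₊₁σᵢ = σᵢ₊₁σᵢσᵢ₊₁. -/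
def braidRels (m : ℕ) : Set (FreeGroup (Fin m)) :=
  { r | (∃ i j : Fin m, (i : ℕ) + 2 ≤ (j : ℕ) ∧
          r = FreeGroup.of i * FreeGroup.of j * (FreeGroup.of j * FreeGroup.of i)⁻¹) ∨
        (∃ i j : Fin m, (i : ℕ) + 1 = (j : ℕ) ∧
          r = FreeGroup.of i * FreeGroup.of j * FreeGroup.of i *
                (FreeGroup.of j * FreeGroup.of i * FreeGroup.of j)⁻¹) }

/-- The braid group Bₙ on n strands, with generators σ₀, …, σ_{n-2}. -/
abbrev BraidGroup (n : ℕ) := PresentedGroup (braidRels (n - 1))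

/-- The product σ₁σ₂⋯σ_{n-1} of all the Artin generators of Bₙ, in order. -/
def deltaWord (n : ℕ) : BraidGroup n :=
  ((List.finRange (n - 1)).map
    (fun i => (PresentedGroup.of i : BraidGroup n))).prod

/-- The full twist Δ² = (σ₁σ₂⋯σ_{n-1})ⁿ in Bₙ. -/
def fullTwist (n : ℕ) : BraidGroup n := deltaWord n ^ n

section BraidRelations

variable {G : Type*} [Monoid G]

structure SatisfiesBraidRelations (m : ℕ) (σ : ℕ → G) : Prop where
  commute : ∀ a b, a + 2 ≤ b → b < m → Commute (σ a) (σ b)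
  braid : ∀ a, a + 1 < m → σ a * σ (a + 1) * σ a = σ (a + 1) * σ a * σ (a + 1)

def ascendingProd (σ : ℕ → G) (t : ℕ) : G := ((List.range t).map σ).prod

lemma ascendingProd_succ (σ : ℕ → G) (t : ℕ) :
    ascendingProd σ (t + 1) = ascendingProd σ t * σ t :=
  List.prod_range_succ σ t

lemma ascendingProd_mem {M : Submonoid G} {σ : ℕ → G} {t : ℕ} (h : ∀ k < t, σ k ∈ M) :
    ascendingProd σ t ∈ M :=
  M.list_prod_mem (by simpa [List.mem_map] using h)

variable {m : ℕ} {σ : ℕ → G}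

lemma SatisfiesBraidRelations.commute_ascendingProd (hσ : SatisfiesBraidRelations m σ)
    {t b : ℕ} (htb : t + 1 ≤ b) (hb : b < m) : Commute (σ b) (ascendingProd σ t) :=
  Commute.list_prod_right _ _ fun _ hx => by
    obtain ⟨a, ha, rfl⟩ := List.mem_map.mp hx
    exact (hσ.commute a b (by grind) hb).symm

lemma SatisfiesBraidRelations.ascendingProd_mul_gen (hσ : SatisfiesBraidRelations m σ)
    {j t : ℕ} (hjt : j + 2 ≤ t) (ht : t ≤ m) :
    ascendingProd σ t * σ j = σ (j + 1) * ascendingProd σ t := by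
  induction t, hjt using Nat.le_induction with
  | base =>
    have hcomm := hσ.commute_ascendingProd (le_refl (j + 1)) (by omega)
    simp only [ascendingProd_succ, mul_assoc, hσ.braid j (by omega)]
    simp only [← mul_assoc, hcomm.eq]
  | succ t hjt ih =>
    rw [ascendingProd_succ, mul_assoc, (hσ.commute j t hjt (by omega)).symm.eq, ← mul_assoc,
      ih (by omega), mul_assoc]

lemma SatisfiesBraidRelations.ascendingProd_pow_mul_gen (hσ : SatisfiesBraidRelations m σ)
    {i k : ℕ} (hik : i + k < m) :
    ascendingProd σ m ^ k * σ i = σ (i + k) * ascendingProd σ m ^ k := by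
  induction k generalizing i with
  | zero => simp
  | succ k ih =>
    rw [pow_succ, mul_assoc, hσ.ascendingProd_mul_gen (by omega) le_rfl, ← mul_assoc,
      ih (by omega), mul_assoc, ← pow_succ, add_right_comm, add_assoc]

end BraidRelations

lemma SatisfiesBraidRelations.ascendingProd_pow_mul_inv_gen {G : Type*} [Group G] {m : ℕ}
    {σ : ℕ → G} (hσ : SatisfiesBraidRelations m σ) {i : ℕ} (hi : i < m) :
    ascendingProd σ m ^ (m + 1) * (σ i)⁻¹ =
      ascendingProd σ m ^ (i + 1) * ascendingProd σ (m - 1) *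
        ascendingProd σ m ^ (m - 1 - i) := by
  obtain ⟨p, rfl⟩ : ∃ p, m = p + 1 := ⟨m - 1, by omega⟩
  set δ := ascendingProd σ (p + 1)
  have hconj : δ ^ (p - i) * σ i = σ p * δ ^ (p - i) := by
    simpa [show i + (p - i) = p by omega] using
      hσ.ascendingProd_pow_mul_gen (i := i) (k := p - i) (by omega)
  rw [mul_inv_eq_iff_eq_mul, Nat.add_sub_cancel, mul_assoc, hconj, ← mul_assoc,
    mul_assoc _ _ (σ p), ← ascendingProd_succ, ← pow_succ, ← pow_add]
  congr 1
  omega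

namespace BraidGroup

noncomputable def gen (n k : ℕ) : BraidGroup n :=
  if h : k < n - 1 then PresentedGroup.of ⟨k, h⟩ else 1

lemma gen_of_lt {n k : ℕ} (h : k < n - 1) : gen n k = PresentedGroup.of ⟨k, h⟩ :=
  dif_pos h

lemma satisfiesBraidRelations_gen (n : ℕ) : SatisfiesBraidRelations (n - 1) (gen n) where
  commute a b hab hb := by
    rw [gen_of_lt (by omega), gen_of_lt hb]
    exact PresentedGroup.mk_eq_mk_of_mul_inv_mem (Or.inl ⟨_, _, hab, rfl⟩)
  braid a ha := by
    rw [gen_of_lt (by omega), gen_of_lt ha]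
    exact PresentedGroup.mk_eq_mk_of_mul_inv_mem (Or.inr ⟨_, _, rfl, rfl⟩)

lemma deltaWord_eq_ascendingProd (n : ℕ) : deltaWord n = ascendingProd (gen n) (n - 1) := by
  rw [deltaWord, ascendingProd, ← List.map_coe_finRange_eq_range, List.map_map]
  congr 2
  funext k
  exact (gen_of_lt k.isLt).symm

end BraidGroup

open BraidGroup in
theorem fullTwist_mul_inv_gen_positive_general (n : ℕ) (i : Fin (n - 1)) :
    fullTwist n * (PresentedGroup.of i : BraidGroup n)⁻¹ ∈
      Submonoid.closure (Set.range (fun j : Fin (n - 1) =>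
        (PresentedGroup.of j : BraidGroup n))) := by
  set M := Submonoid.closure (Set.range (fun j : Fin (n - 1) =>
    (PresentedGroup.of j : BraidGroup n)))
  have hgen_mem : ∀ k < n - 1, gen n k ∈ M := fun k hk =>
    gen_of_lt hk ▸ Submonoid.subset_closure ⟨_, rfl⟩
  have hΔ : fullTwist n = ascendingProd (gen n) (n - 1) ^ (n - 1 + 1) := by
    rw [Nat.sub_add_cancel (by have := i.isLt; omega : 1 ≤ n), fullTwist,
      deltaWord_eq_ascendingProd]
  rw [hΔ, ← gen_of_lt i.isLt,
    (satisfiesBraidRelations_gen n).ascendingProd_pow_mul_inv_gen i.isLt]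
  have hδ_mem : ascendingProd (gen n) (n - 1) ∈ M := ascendingProd_mem hgen_mem
  have hδ'_mem : ascendingProd (gen n) (n - 1 - 1) ∈ M :=
    ascendingProd_mem fun k hk => hgen_mem k (by omega)
  exact mul_mem (mul_mem (pow_mem hδ_mem _) hδ'_mem) (pow_mem hδ_mem _)

/-- For n ≥ 2 and each Artin generator σᵢ of Bₙ, the element Δ²σᵢ⁻¹ lies in the
submonoid generated by the positive generators, i.e. it is a positive braid. -/
theorem fullTwist_mul_inv_gen_positive (n : ℕ) (hn : 2 ≤ n) (i : Fin (n - 1)) :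
    fullTwist n * (PresentedGroup.of i : BraidGroup n)⁻¹ ∈
      Submonoid.closure (Set.range (fun j : Fin (n - 1) =>
        (PresentedGroup.of j : BraidGroup n))) :=
  fullTwist_mul_inv_gen_positive_general n i
end
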